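/- arXiv:1303.6322 — 3 statements merged into one kernel-verified Lean document; each statement's English description precedes it below -/
import Mathlib

section
/- For n ≥ 3, ζ = 2π/n, and k, l ∈ {2, ..., n-2} ∪ {n}, the vectors T_k(z) = (0, n^{-1/2} e^{(ikI+J)ζ} z, ..., n^{-1/2} e^{n(ikI+J)ζ} z) in ℂ^{2(n+1)} satisfy ⟨T_k(z_k), T_l(z_l)⟩ = δ_{kl} ⟨z_k, z_l⟩, where ⟨·,·⟩ is the Hermitian inner product. -/
/-!
Write `u = e^{2πi/n}`. Since the rotation `e^{Jjζ}` is unitary, the `j`-th block of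
`⟨T_k z, T_l w⟩` is `n⁻¹ ωʲ ⟨z, w⟩` with `ω = u^{l-k}`, an `n`-th root of unity. Summing over
`j = 1, …, n` gives `⟨z, w⟩` if `ω = 1`, i.e. `n ∣ l - k`, and `0` otherwise; for
`1 ≤ k, l ≤ n` the divisibility forces `k = l`.
-/

open Finset

/-- The rotation matrix `e^{Jθ}` viewed over ℂ. -/
noncomputable def rotC (θ : ℝ) : Matrix (Fin 2) (Fin 2) ℂ :=
  !![(Real.cos θ : ℂ), (-Real.sin θ : ℂ); (Real.sin θ : ℂ), (Real.cos θ : ℂ)]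

/-- `T_k(z) ∈ ℂ^{2(n+1)}`, with zero-th 2-block equal to `0` and `j`-th 2-block equal to
`n^{-1/2} e^{j(ikI+J)ζ} z = n^{-1/2} e^{ijkζ} e^{Jjζ} z` for `j = 1, ..., n`, where `ζ = 2π/n`. -/
noncomputable def Tmap (n k : ℕ) (z : Fin 2 → ℂ) : Fin (n + 1) → Fin 2 → ℂ :=
  fun j =>
    if (j : ℕ) = 0 then 0
    else ((Real.sqrt n)⁻¹ : ℂ) •
      (Complex.exp (Complex.I * k * j * (2 * Real.pi / n)) •
        (rotC ((j : ℕ) * (2 * Real.pi / n))).mulVec z)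

open scoped Matrix

theorem Matrix.star_mulVec_dotProduct_mulVec {m α : Type*} [Fintype m] [DecidableEq m]
    [CommRing α] [StarRing α] {U : Matrix m m α} (hU : U ∈ Matrix.unitaryGroup m α)
    (v w : m → α) : star (U *ᵥ v) ⬝ᵥ (U *ᵥ w) = star v ⬝ᵥ w := by
  rw [Matrix.star_mulVec, Matrix.dotProduct_mulVec, Matrix.vecMul_vecMul,
    ← Matrix.star_eq_conjTranspose, Matrix.mem_unitaryGroup_iff'.mp hU, Matrix.vecMul_one]

theorem rotC_mem_unitaryGroup (θ : ℝ) : rotC θ ∈ Matrix.unitaryGroup (Fin 2) ℂ := by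
  have h : (Real.cos θ : ℂ) ^ 2 + (Real.sin θ : ℂ) ^ 2 = 1 := mod_cast Real.cos_sq_add_sin_sq θ
  rw [Matrix.mem_unitaryGroup_iff']
  ext i j
  fin_cases i <;> fin_cases j <;>
    simp [rotC, Matrix.mul_apply, Fin.sum_univ_two, -Complex.ofReal_cos, -Complex.ofReal_sin] <;>
    first | linear_combination h | ring

theorem sum_range_pow_succ_of_pow_eq_one {K : Type*} [Field K] [DecidableEq K] {ω : K} {n : ℕ}
    (h : ω ^ n = 1) : ∑ i ∈ range n, ω ^ (i + 1) = if ω = 1 then (n : K) else 0 := by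
  split_ifs with hω
  · simp [hω]
  · simp_rw [pow_succ, ← sum_mul, geom_sum_eq hω, h, sub_self, zero_div, zero_mul]

theorem star_pow_mul_pow_of_norm_eq_one {u : ℂ} (hu : ‖u‖ = 1) (k l m : ℕ) :
    star (u ^ (k * m)) * u ^ (l * m) = (u ^ ((l : ℤ) - k)) ^ m := by
  have hu0 : u ≠ 0 := norm_ne_zero_iff.mp (by simp [hu])
  rw [star_pow, Complex.star_def, ← RCLike.inv_eq_conj hu, ← zpow_natCast, ← zpow_natCast u,
    ← zpow_natCast _ m, _root_.inv_zpow', ← zpow_add₀ hu0, ← zpow_mul]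
  push_cast
  ring_nf

theorem Tmap_succ (n k : ℕ) (z : Fin 2 → ℂ) (j : Fin n) :
    Tmap n k z j.succ =
      (((Real.sqrt n)⁻¹ : ℂ) * Complex.exp (2 * Real.pi * Complex.I / n) ^ (k * (j + 1))) •
        rotC ((j + 1 : ℕ) * (2 * Real.pi / n)) *ᵥ z := by
  rw [Tmap, Fin.val_succ, if_neg (Nat.succ_ne_zero j), mul_smul, ← Complex.exp_nat_mul]
  push_cast
  ring_nf

theorem sum_star_Tmap_dotProduct_Tmap (n k l : ℕ) (hn : n ≠ 0) (z w : Fin 2 → ℂ) :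
    ∑ j, star (Tmap n k z j) ⬝ᵥ Tmap n l w j
      = (if (n : ℤ) ∣ (l : ℤ) - k then 1 else 0) * (star z ⬝ᵥ w) := by
  set u := Complex.exp (2 * Real.pi * Complex.I / n)
  have hu : IsPrimitiveRoot u n := Complex.isPrimitiveRoot_exp n hn
  set ω := u ^ ((l : ℤ) - k)
  have hωn : ω ^ n = 1 := by
    rw [← zpow_natCast, ← zpow_mul, mul_comm, zpow_mul, zpow_natCast, hu.pow_eq_one, one_zpow]
  have hsqrt : star (Real.sqrt n : ℂ)⁻¹ * (Real.sqrt n : ℂ)⁻¹ = (n : ℂ)⁻¹ := by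
    rw [Complex.star_def, map_inv₀, Complex.conj_ofReal, ← mul_inv, ← Complex.ofReal_mul,
      Real.mul_self_sqrt n.cast_nonneg, Complex.ofReal_natCast]
  have hblock (j : Fin n) : star (Tmap n k z j.succ) ⬝ᵥ Tmap n l w j.succ
      = (n : ℂ)⁻¹ * (star z ⬝ᵥ w) * ω ^ (j + 1 : ℕ) := by
    rw [Tmap_succ, Tmap_succ, star_smul, smul_dotProduct, dotProduct_smul,
      Matrix.star_mulVec_dotProduct_mulVec (rotC_mem_unitaryGroup _), smul_eq_mul, smul_eq_mul,
      ← star_pow_mul_pow_of_norm_eq_one (hu.norm'_eq_one hn), star_mul', ← hsqrt]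
    ring
  calc ∑ j, star (Tmap n k z j) ⬝ᵥ Tmap n l w j
      = (n : ℂ)⁻¹ * (star z ⬝ᵥ w) * ∑ i ∈ range n, ω ^ (i + 1) := by
        simp_rw [Fin.sum_univ_succ, hblock, mul_sum]
        rw [Fin.sum_univ_eq_sum_range (fun i => (n : ℂ)⁻¹ * (star z ⬝ᵥ w) * ω ^ (i + 1))]
        simp [Tmap]
    _ = _ := by
        rw [sum_range_pow_succ_of_pow_eq_one hωn, if_congr (hu.zpow_eq_one_iff_dvd _) rfl rfl]
        split_ifs
        · field_simp
        · simp

theorem Int.natCast_dvd_sub_iff_eq {n k l : ℕ} (hk₀ : 0 < k) (hkn : k ≤ n) (hl₀ : 0 < l)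
    (hln : l ≤ n) : (n : ℤ) ∣ (l : ℤ) - k ↔ k = l := by
  refine ⟨fun h => ?_, fun h => by simp [h]⟩
  have := Int.eq_zero_of_abs_lt_dvd h (abs_lt.mpr ⟨by omega, by omega⟩)
  omega

theorem stmt5 (n : ℕ) (hn : 3 ≤ n) (k l : ℕ)
    (hk : k ∈ Finset.Icc 2 (n - 2) ∪ {n}) (hl : l ∈ Finset.Icc 2 (n - 2) ∪ {n})
    (z w : Fin 2 → ℂ) :
    ∑ j : Fin (n + 1), ∑ a : Fin 2, (starRingEnd ℂ) (Tmap n k z j a) * Tmap n l w j a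
      = (if k = l then 1 else 0) * ∑ a : Fin 2, (starRingEnd ℂ) (z a) * w a := by
  simp only [Finset.mem_union, Finset.mem_Icc, Finset.mem_singleton] at hk hl
  have hkl : (n : ℤ) ∣ (l : ℤ) - k ↔ k = l :=
    Int.natCast_dvd_sub_iff_eq (by omega) (by omega) (by omega) (by omega)
  rw [← if_congr hkl rfl rfl]
  exact sum_star_Tmap_dotProduct_Tmap n k l (by omega) z w
end

section
/- For n ≥ 3, ζ = 2π/n, α ≥ 1, and a_j = e^{ijζ} for j = 1,...,n with a_0 = 0, the configuration (a_0, ..., a_n) is a critical point of the potential V(x) = ω(xᵀℳx)/2 + Σ_{i<j} μ_i μ_j φ_α(‖x_j - x_i‖), where μ_0 = μ, μ_j = 1 for j ≥ 1, and φ_α'(r) = -1/r^α, provided ω = μ + s₁ with s₁ = 2^{-α} Σ_{j=1}^{n-1} sin^{-(α-1)}(jζ/2). Equivalently, for each j ∈ {1,...,n}: ω a_j - Σ_{i=0, i≠j}^n μ_i (a_j - a_i)/‖a_j - a_i‖^{α+1} = 0, and Σ_{i=1}^n a_i/‖a_i‖^{α+1} = 0. -/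
/-!
The vertices `w ^ j` (`w = exp (2πi/n)`) of the polygon are the `n`-th roots of unity, so they sum
to zero: this is the equation for the central body. Multiplication by `w ^ j` permutes the vertices,
so the force exerted by the polygon on the vertex `w ^ j` is `w ^ j * S` with
`S = ∑_{k=1}^{n-1} (1 - w^k) / ‖1 - w^k‖^(α+1)`. The reflection `k ↦ n - k` conjugates the terms
of `S`, so `S` is real; on the unit circle `Re (1 - z) = ‖1 - z‖² / 2` and
`‖1 - w^k‖ = 2 sin (kπ/n)`, which gives `S = s₁`. The central body contributes `μ * w ^ j`, hence `ω = μ + s₁`.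
-/

open Finset ComplexConjugate

lemma Finset.sum_Icc_one_eq_sum_range {M : Type*} [AddCommMonoid M] (f : ℕ → M) (m : ℕ) :
    ∑ i ∈ Icc 1 m, f i = ∑ i ∈ range m, f (i + 1) := by
  rw [range_eq_Ico, sum_Ico_add', zero_add, Ico_add_one_right_eq_Icc]

namespace Function.Periodic

variable {M : Type*} [AddCommMonoid M] {G : ℕ → M} {n : ℕ}

lemma sum_range_succ_eq (hG : Periodic G n) : ∑ i ∈ range n, G (i + 1) = ∑ i ∈ range n, G i := by
  cases n with
  | zero => simp
  | succ k => rw [sum_range_succ, sum_range_succ', ← zero_add (k + 1), hG]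

lemma sum_Icc_one_eq_sum_range (hG : Periodic G n) : ∑ i ∈ Icc 1 n, G i = ∑ i ∈ range n, G i := by
  rw [Finset.sum_Icc_one_eq_sum_range, hG.sum_range_succ_eq]

lemma sum_range_add (hG : Periodic G n) (j : ℕ) :
    ∑ i ∈ range n, G (j + i) = ∑ i ∈ range n, G i := by
  induction j with
  | zero => simp
  | succ j ih =>
    have hshift : Periodic (fun i => G (j + i)) n := fun i => by simpa [add_assoc] using hG (j + i)
    simpa only [add_right_comm j 1, add_assoc, ih] using hshift.sum_range_succ_eq

end Function.Periodic

/-- The force `-φ_α'(‖z‖) z / ‖z‖` between two unit masses at relative position `z`. -/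
noncomputable def powerForce (α : ℝ) (z : ℂ) : ℂ := z / ((‖z‖ ^ (α + 1) : ℝ) : ℂ)

section powerForce

variable (α : ℝ) {u z : ℂ}

@[simp]
lemma powerForce_zero : powerForce α 0 = 0 := by simp [powerForce]

lemma powerForce_of_norm_eq_one (hu : ‖u‖ = 1) : powerForce α u = u := by
  simp [powerForce, hu]

lemma powerForce_mul_of_norm_eq_one (hu : ‖u‖ = 1) (z : ℂ) :
    powerForce α (u * z) = u * powerForce α z := by
  simp only [powerForce, norm_mul, hu, one_mul, mul_div_assoc]

lemma powerForce_conj (z : ℂ) : powerForce α (conj z) = conj (powerForce α z) := by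
  simp [powerForce, map_div₀]

lemma re_powerForce_one_sub (hz : ‖z‖ = 1) (hz1 : z ≠ 1) :
    (powerForce α (1 - z)).re = ‖1 - z‖ ^ (1 - α) / 2 := by
  have hpos : 0 < ‖1 - z‖ := norm_pos_iff.2 (sub_ne_zero.2 hz1.symm)
  -- on the unit circle, `‖1 - z‖ ^ 2 = 2 - 2 Re z = 2 Re (1 - z)`
  have hre : (1 - z).re = ‖1 - z‖ ^ 2 / 2 := by
    have h1 := Complex.sq_norm z
    have h2 := Complex.sq_norm (1 - z)
    rw [Complex.normSq_apply] at h1 h2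
    simp only [Complex.sub_re, Complex.one_re, Complex.sub_im, Complex.one_im] at h2 ⊢
    nlinarith
  rw [powerForce, Complex.div_ofReal_re, hre, div_right_comm, ← Real.rpow_natCast,
    ← Real.rpow_sub hpos]
  norm_num
  ring_nf

end powerForce

lemma IsPrimitiveRoot.sum_Icc_one_pow_eq_zero {R : Type*} [CommRing R] [IsDomain R] {w : R} {n : ℕ}
    (hw : IsPrimitiveRoot w n) (hn : 1 < n) : ∑ i ∈ Icc 1 n, w ^ i = 0 := by
  have hper : Function.Periodic (w ^ ·) n := fun i => by simp [pow_add, hw.pow_eq_one]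
  rw [hper.sum_Icc_one_eq_sum_range, hw.geom_sum_eq_zero hn]

section RegularPolygon

variable {w : ℂ} {n : ℕ}

lemma sum_powerForce_pow_sub_pow (hw : IsPrimitiveRoot w n) (hn : n ≠ 0) (α : ℝ) (j : ℕ) :
    ∑ i ∈ Icc 1 n, powerForce α (w ^ j - w ^ i) =
      w ^ j * ∑ k ∈ Icc 1 (n - 1), powerForce α (1 - w ^ k) := by
  have hper : Function.Periodic (fun i => powerForce α (w ^ j - w ^ i)) n := fun i => by
    simp [pow_add, hw.pow_eq_one]
  have hnorm : ‖w ^ j‖ = 1 := by simp [hw.norm'_eq_one hn]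
  obtain ⟨m, rfl⟩ := Nat.exists_eq_add_one_of_ne_zero hn
  calc ∑ i ∈ Icc 1 (m + 1), powerForce α (w ^ j - w ^ i)
      = ∑ i ∈ range (m + 1), powerForce α (w ^ j - w ^ (j + i)) := by
        rw [hper.sum_Icc_one_eq_sum_range, ← hper.sum_range_add j]
    _ = w ^ j * ∑ i ∈ range (m + 1), powerForce α (1 - w ^ i) := by
        simp only [mul_sum, pow_add, ← mul_one_sub, powerForce_mul_of_norm_eq_one α hnorm]
    _ = w ^ j * ∑ k ∈ Icc 1 (m + 1 - 1), powerForce α (1 - w ^ k) := by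
        rw [sum_range_succ', Nat.add_sub_cancel, Finset.sum_Icc_one_eq_sum_range]
        simp

lemma conj_sum_powerForce_one_sub_pow (hw : IsPrimitiveRoot w n) (hn : n ≠ 0) (α : ℝ) :
    conj (∑ k ∈ Icc 1 (n - 1), powerForce α (1 - w ^ k)) =
      ∑ k ∈ Icc 1 (n - 1), powerForce α (1 - w ^ k) := by
  have hconj : ∀ k ∈ Icc 1 (n - 1),
      conj (powerForce α (1 - w ^ k)) = powerForce α (1 - w ^ (n - k)) := by
    intro k hk
    have hk : k ≤ n := by grind
    have hinv : w ^ (n - k) = (w ^ k)⁻¹ :=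
      eq_inv_of_mul_eq_one_left (by rw [← pow_add, Nat.sub_add_cancel hk, hw.pow_eq_one])
    rw [← powerForce_conj, map_sub, map_one, ← Complex.inv_eq_conj (by simp [hw.norm'_eq_one hn]),
      hinv]
  rw [map_sum, sum_congr rfl hconj]
  exact sum_nbij' (n - ·) (n - ·) (by simp; omega) (by simp; omega) (by simp; omega)
    (by simp; omega) (fun _ _ => rfl)

lemma sum_powerForce_one_sub_pow_eq_sum_norm_rpow (hw : IsPrimitiveRoot w n) (hn : n ≠ 0) (α : ℝ) :
    ∑ k ∈ Icc 1 (n - 1), powerForce α (1 - w ^ k) =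
      ((∑ k ∈ Icc 1 (n - 1), ‖1 - w ^ k‖ ^ (1 - α) / 2 : ℝ) : ℂ) := by
  rw [← Complex.conj_eq_iff_re.1 (conj_sum_powerForce_one_sub_pow hw hn α), Complex.re_sum]
  refine congrArg _ (sum_congr rfl fun k hk => re_powerForce_one_sub α ?_ ?_)
  · simp [hw.norm'_eq_one hn]
  · exact hw.pow_ne_one_of_pos_of_lt (by grind) (by grind)

end RegularPolygon

lemma norm_one_sub_exp_two_pi_I_div_pow {n k : ℕ} (hk : k ≤ n) :
    ‖1 - Complex.exp (2 * Real.pi * Complex.I / n) ^ k‖ =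
      2 * Real.sin (k * (2 * Real.pi / n) / 2) := by
  have harg : k * (2 * Real.pi / n) / 2 = Real.pi * (k / n) := by ring
  have hkn : (k : ℝ) / n ≤ 1 := div_le_one_of_le₀ (by exact_mod_cast hk) (Nat.cast_nonneg n)
  have hsin : 0 ≤ Real.sin (k * (2 * Real.pi / n) / 2) := by
    rw [harg]
    exact Real.sin_nonneg_of_nonneg_of_le_pi (by positivity)
      (mul_le_of_le_one_right Real.pi_pos.le hkn)
  rw [norm_sub_rev, ← Complex.exp_nat_mul, ← abs_of_nonneg (mul_nonneg zero_le_two hsin),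
    ← Real.norm_eq_abs, ← Complex.norm_exp_I_mul_ofReal_sub_one]
  congr 3
  push_cast
  ring

lemma sum_powerForce_one_sub_exp_two_pi_I_div_pow {n : ℕ} (hn : n ≠ 0) (α : ℝ) :
    ∑ k ∈ Icc 1 (n - 1), powerForce α (1 - Complex.exp (2 * Real.pi * Complex.I / n) ^ k) =
      (((1 / 2 ^ α) * ∑ k ∈ Icc 1 (n - 1),
        1 / Real.sin (k * (2 * Real.pi / n) / 2) ^ (α - 1) : ℝ) : ℂ) := by
  have hw := Complex.isPrimitiveRoot_exp n hn
  rw [sum_powerForce_one_sub_pow_eq_sum_norm_rpow hw hn, mul_sum]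
  congr 1
  refine sum_congr rfl fun k hk => ?_
  rw [mem_Icc] at hk
  have hnorm := norm_one_sub_exp_two_pi_I_div_pow (n := n) (k := k) (by omega)
  have hs : 0 < Real.sin (k * (2 * Real.pi / n) / 2) := by
    have hwk := hw.pow_ne_one_of_pos_of_lt (l := k) (by omega) (by omega)
    have := norm_pos_iff.2 (sub_ne_zero.2 hwk.symm)
    linarith
  rw [hnorm, Real.mul_rpow zero_le_two hs.le, Real.rpow_sub zero_lt_two, Real.rpow_one,
    ← neg_sub α 1, Real.rpow_neg hs.le]
  field_simp

theorem stmt7_general (n : ℕ) (hn : 3 ≤ n) (α : ℝ) (μ : ℝ) :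
    let ζ : ℝ := 2 * Real.pi / n
    let a : ℕ → ℂ := fun i => if i = 0 then 0 else Complex.exp (Complex.I * i * ζ)
    let m : ℕ → ℝ := fun i => if i = 0 then μ else 1
    let s₁ : ℝ := (1 / 2 ^ α) * ∑ j ∈ Finset.Icc 1 (n - 1), 1 / Real.sin (j * ζ / 2) ^ (α - 1)
    let ω : ℝ := μ + s₁
    -- the gradient with respect to the central body vanishes
    (∑ i ∈ Finset.Icc 1 n, a i / ((‖a i‖ ^ (α + 1) : ℝ) : ℂ) = 0) ∧
    -- the gradient with respect to each of the bodies on the polygon vanishes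
    ∀ j ∈ Finset.Icc 1 n,
      (ω : ℂ) * a j -
        ∑ i ∈ (Finset.range (n + 1)).erase j,
          (m i : ℂ) * (a j - a i) / ((‖a j - a i‖ ^ (α + 1) : ℝ) : ℂ) = 0 := by
  intro ζ a m s₁ ω
  have hn0 : n ≠ 0 := by omega
  set w := Complex.exp (2 * Real.pi * Complex.I / n)
  have hw : IsPrimitiveRoot w n := Complex.isPrimitiveRoot_exp n hn0
  have ha (i : ℕ) (hi : i ∈ Icc 1 n) : a i = w ^ i := by
    simp only [a, w, if_neg (by grind : i ≠ 0), ← Complex.exp_nat_mul, ζ]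
    congr 1
    push_cast
    ring
  have hnorm (i : ℕ) : ‖w ^ i‖ = 1 := by simp [hw.norm'_eq_one hn0]
  refine ⟨?_, fun j hj => ?_⟩
  · calc ∑ i ∈ Icc 1 n, a i / ((‖a i‖ ^ (α + 1) : ℝ) : ℂ)
        = ∑ i ∈ Icc 1 n, w ^ i := sum_congr rfl fun i hi => by
          rw [ha i hi]
          exact powerForce_of_norm_eq_one α (hnorm i)
      _ = 0 := hw.sum_Icc_one_pow_eq_zero (by omega)
  · have hsplit : (range (n + 1)).erase j = insert 0 ((Icc 1 n).erase j) := by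
      ext i
      simp only [mem_erase, mem_range, mem_insert, mem_Icc]
      grind
    have hrest : ∑ i ∈ (Icc 1 n).erase j,
        (m i : ℂ) * (a j - a i) / ((‖a j - a i‖ ^ (α + 1) : ℝ) : ℂ) = w ^ j * s₁ := by
      calc _ = ∑ i ∈ (Icc 1 n).erase j, powerForce α (w ^ j - w ^ i) := sum_congr rfl fun i hi => by
              have hi' := mem_of_mem_erase hi
              rw [ha i hi', ha j hj, powerForce, mul_div_assoc]
              simp [m, (by grind : i ≠ 0)]
        _ = ∑ i ∈ Icc 1 n, powerForce α (w ^ j - w ^ i) := sum_erase _ (by simp)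
        _ = w ^ j * s₁ := by
          rw [sum_powerForce_pow_sub_pow hw hn0, sum_powerForce_one_sub_exp_two_pi_I_div_pow hn0]
    rw [hsplit, sum_insert (by simp), hrest]
    simp only [m, a, ha j hj, ω, if_pos, sub_zero, hnorm, Real.one_rpow, Complex.ofReal_one,
      div_one, Complex.ofReal_add]
    ring

theorem stmt7 (n : ℕ) (hn : 3 ≤ n) (α : ℝ) (hα : 1 ≤ α) (μ : ℝ) :
    let ζ : ℝ := 2 * Real.pi / n
    let a : ℕ → ℂ := fun i => if i = 0 then 0 else Complex.exp (Complex.I * i * ζ)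
    let m : ℕ → ℝ := fun i => if i = 0 then μ else 1
    let s₁ : ℝ := (1 / 2 ^ α) * ∑ j ∈ Finset.Icc 1 (n - 1), 1 / Real.sin (j * ζ / 2) ^ (α - 1)
    let ω : ℝ := μ + s₁
    -- the gradient with respect to the central body vanishes
    (∑ i ∈ Finset.Icc 1 n, a i / ((‖a i‖ ^ (α + 1) : ℝ) : ℂ) = 0) ∧
    -- the gradient with respect to each of the bodies on the polygon vanishes
    ∀ j ∈ Finset.Icc 1 n,
      (ω : ℂ) * a j -
        ∑ i ∈ (Finset.range (n + 1)).erase j,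
          (m i : ℂ) * (a j - a i) / ((‖a j - a i‖ ^ (α + 1) : ℝ) : ℂ) = 0 :=
  stmt7_general n hn α μ
end

section
/- For integers n ≥ 2 and 0 ≤ k ≤ n, with ζ = 2π/n: Σ_{j=1}^{n-1} sin²(kjζ/2)/sin²(jζ/2) = k(n - k). Equivalently, for α = 1, the sum s_k := (1/2) Σ_{j=1}^{n-1} sin²(kjζ/2)/sin²(jζ/2) equals k(n-k)/2. -/
/-!
For `θ = jπ/n`, the quotient `sin² (kθ) / sin² θ` is the squared modulus of the geometric sum
`∑_{m<k} ζ^{jm}` with `ζ = e^{2πi/n}` (the Fejér kernel). Summing over all `j < n`,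
orthogonality of the characters `j ↦ ζ^{jm}`, `m < k ≤ n`, gives `n k`; the term `j = 0`
contributes `k²`, leaving `k (n - k)`.
-/

open Finset Complex ComplexConjugate

lemma norm_geom_sum_exp_mul_abs_sin (θ : ℝ) (k : ℕ) :
    ‖∑ m ∈ range k, cexp (I * ↑(2 * θ)) ^ m‖ * |Real.sin θ| = |Real.sin (k * θ)| := by
  have hgeom := congrArg norm (geom_sum_mul (cexp (I * ↑(2 * θ))) k)
  rwa [← Complex.exp_nat_mul, norm_mul, norm_exp_I_mul_ofReal_sub_one,
    show (k : ℂ) * (I * ↑(2 * θ)) = I * ↑(2 * (k * θ)) by push_cast; ring,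
    norm_exp_I_mul_ofReal_sub_one, mul_div_cancel_left₀ _ two_ne_zero,
    mul_div_cancel_left₀ _ two_ne_zero, Real.norm_eq_abs, Real.norm_eq_abs, abs_mul, abs_mul,
    abs_two, mul_left_comm, mul_right_inj' two_ne_zero] at hgeom

lemma sin_sq_div_sin_sq_eq_norm_geom_sum_sq {θ : ℝ} (hθ : Real.sin θ ≠ 0) (k : ℕ) :
    Real.sin (k * θ) ^ 2 / Real.sin θ ^ 2 =
      ‖∑ m ∈ range k, cexp (I * ↑(2 * θ)) ^ m‖ ^ 2 := by
  rw [← sq_abs (Real.sin (k * θ)), ← norm_geom_sum_exp_mul_abs_sin, mul_pow, sq_abs,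
    mul_div_cancel_right₀ _ (pow_ne_zero 2 hθ)]

lemma sin_nat_mul_pi_div_pos {j n : ℕ} (hj : 0 < j) (hjn : j < n) :
    0 < Real.sin (j * Real.pi / n) := by
  have hn : (0 : ℝ) < n := Nat.cast_pos.mpr (hj.trans hjn)
  refine Real.sin_pos_of_pos_of_lt_pi (div_pos (mul_pos (Nat.cast_pos.mpr hj) Real.pi_pos) hn) ?_
  rw [div_lt_iff₀ hn]
  exact (mul_lt_mul_of_pos_right (Nat.cast_lt.mpr hjn) Real.pi_pos).trans_eq (mul_comm _ _)

lemma geom_sum_range_of_pow_eq_one {R : Type*} [CommRing R] [IsDomain R] [DecidableEq R]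
    {ω : R} {n : ℕ} (h : ω ^ n = 1) :
    ∑ j ∈ range n, ω ^ j = if ω = 1 then (n : R) else 0 := by
  split_ifs with hω
  · simp [hω]
  · refine eq_zero_of_ne_zero_of_mul_left_eq_zero (sub_ne_zero_of_ne (Ne.symm hω)) ?_
    rw [mul_neg_geom_sum, h, sub_self]

lemma IsPrimitiveRoot.sum_norm_sq_geom_sum {ζ : ℂ} {n k : ℕ} (h : IsPrimitiveRoot ζ n)
    (hn : n ≠ 0) (hk : k ≤ n) :
    ∑ j ∈ range n, ‖∑ m ∈ range k, (ζ ^ j) ^ m‖ ^ 2 = n * k := by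
  have hζ0 : ζ ≠ 0 := h.ne_zero hn
  have hconj (j : ℕ) : conj (ζ ^ j) = (ζ ^ j)⁻¹ := by
    rw [inv_eq_conj (by rw [norm_pow, h.norm'_eq_one hn, one_pow])]
  have horth (a b : ℕ) (ha : a < n) (hb : b < n) : ζ ^ a * (ζ ^ b)⁻¹ = 1 ↔ a = b := by
    rw [mul_inv_eq_one₀ (pow_ne_zero b hζ0)]
    exact ⟨fun hab => h.pow_inj ha hb hab, fun hab => hab ▸ rfl⟩
  apply ofReal_injective
  push_cast
  calc ∑ j ∈ range n, ((‖∑ m ∈ range k, (ζ ^ j) ^ m‖ : ℂ)) ^ 2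
      = ∑ j ∈ range n, ∑ a ∈ range k, ∑ b ∈ range k, (ζ ^ a * (ζ ^ b)⁻¹) ^ j := by
        refine sum_congr rfl fun j _ => ?_
        rw [← mul_conj', map_sum, sum_mul_sum]
        refine sum_congr rfl fun a _ => sum_congr rfl fun b _ => ?_
        rw [map_pow, hconj]
        ring
    _ = ∑ a ∈ range k, ∑ b ∈ range k, ∑ j ∈ range n, (ζ ^ a * (ζ ^ b)⁻¹) ^ j := by
        rw [sum_comm]
        exact sum_congr rfl fun _ _ => sum_comm
    _ = ∑ a ∈ range k, ∑ b ∈ range k, if a = b then (n : ℂ) else 0 := by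
        refine sum_congr rfl fun a ha => sum_congr rfl fun b hb => ?_
        have ha' := (mem_range.mp ha).trans_le hk
        have hb' := (mem_range.mp hb).trans_le hk
        have hroot : (ζ ^ a * (ζ ^ b)⁻¹) ^ n = 1 := by
          rw [mul_pow, inv_pow, ← pow_mul, ← pow_mul, pow_mul', pow_mul', h.pow_eq_one, one_pow,
            one_pow, inv_one, mul_one]
        rw [geom_sum_range_of_pow_eq_one hroot, if_congr (horth a b ha' hb') rfl rfl]
    _ = n * k := by
        simp +contextual [sum_ite_eq, mul_comm]

theorem stmt11 (n : ℕ) (hn : 2 ≤ n) (k : ℕ) (hk : k ≤ n) :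
    (∑ j ∈ Finset.Icc 1 (n - 1),
        Real.sin (k * j * (2 * Real.pi / n) / 2) ^ 2 /
          Real.sin (j * (2 * Real.pi / n) / 2) ^ 2)
      = (k : ℝ) * ((n : ℝ) - k) := by
  have hn0 : n ≠ 0 := by omega
  set ζ := cexp (2 * Real.pi * I / n)
  have hζ : IsPrimitiveRoot ζ n := isPrimitiveRoot_exp n hn0
  have hterm (j : ℕ) (hj : j ∈ Ico 1 n) :
      Real.sin (k * j * (2 * Real.pi / n) / 2) ^ 2 / Real.sin (j * (2 * Real.pi / n) / 2) ^ 2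
        = ‖∑ m ∈ range k, (ζ ^ j) ^ m‖ ^ 2 := by
    obtain ⟨hj1, hjn⟩ := mem_Ico.mp hj
    set θ := (j : ℝ) * Real.pi / n
    have hζj : ζ ^ j = cexp (I * ↑(2 * θ)) := by
      rw [← Complex.exp_nat_mul]
      congr 1
      push_cast [θ]
      ring
    rw [show (j : ℝ) * (2 * Real.pi / n) / 2 = θ by ring,
      show (k : ℝ) * j * (2 * Real.pi / n) / 2 = k * θ by ring, hζj,
      sin_sq_div_sin_sq_eq_norm_geom_sum_sq (sin_nat_mul_pi_div_pos hj1 hjn).ne']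
  have htotal := hζ.sum_norm_sq_geom_sum hn0 hk
  rw [sum_range_eq_add_Ico _ (by omega)] at htotal
  rw [show Icc 1 (n - 1) = Ico 1 n by ext; simp; omega, sum_congr rfl hterm]
  simp only [pow_zero, one_pow, sum_const, card_range, nsmul_eq_mul, mul_one,
    Complex.norm_natCast] at htotal
  linear_combination htotal
end
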